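/- arXiv:2605.01032 — 2 statements merged into one kernel-verified Lean document; each statement's English description precedes it below -/
import Mathlib

section
/- (bind_within_caps) For any capability sets caps1 and caps2, any tree t : itree E A, and any continuation k : A → itree E B, if within_caps caps1 t and for every r : A within_caps caps2 (k r), then within_caps (cap_union caps1 caps2) (t >>= k). -/
/-- The polynomial functor whose final coalgebra is the type of interaction trees. -/
def ITreePF (E : Type → Type) (R : Type) : PFunctor.{1} :=
  ⟨ULift.{1} R ⊕ (PUnit.{2} ⊕ Σ X : Type, E X),
   fun a =>
     match a with
     | Sum.inl _ => PEmpty.{2}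
     | Sum.inr (Sum.inl _) => PUnit.{2}
     | Sum.inr (Sum.inr p) => ULift.{1} p.1⟩

/-- Interaction trees, defined coinductively as the M-type of `ITreePF`. -/
def ITree (E : Type → Type) (R : Type) : Type 1 := PFunctor.M (ITreePF E R)

namespace ITree

variable {E : Type → Type} {R A B : Type}

/-- Pure value leaf. -/
def Ret (r : R) : ITree E R :=
  PFunctor.M.mk ⟨Sum.inl ⟨r⟩, fun e => e.elim⟩

/-- Silent step. -/
def Tau (t : ITree E R) : ITree E R :=
  PFunctor.M.mk ⟨Sum.inr (Sum.inl PUnit.unit), fun _ => t⟩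

/-- Visible event with continuation. -/
def Vis {X : Type} (e : E X) (k : X → ITree E R) : ITree E R :=
  PFunctor.M.mk ⟨Sum.inr (Sum.inr ⟨X, e⟩), fun x => k x.down⟩

/-- Monadic bind: replace every `Ret r` leaf of `t` by `k r`, by corecursion. -/
def bind (t : ITree E A) (k : A → ITree E B) : ITree E B :=
  PFunctor.M.corec
    (fun s : ITree E A ⊕ ITree E B =>
      match s with
      | Sum.inl t =>
        match PFunctor.M.dest t with
        | ⟨Sum.inl r, _⟩ =>
          let d := PFunctor.M.dest (k r.down)
          ⟨d.1, fun b => Sum.inr (d.2 b)⟩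
        | ⟨Sum.inr (Sum.inl _), f⟩ =>
          ⟨Sum.inr (Sum.inl PUnit.unit), fun b => Sum.inl (f b)⟩
        | ⟨Sum.inr (Sum.inr p), f⟩ =>
          ⟨Sum.inr (Sum.inr p), fun b => Sum.inl (f b)⟩
      | Sum.inr u =>
        let d := PFunctor.M.dest u
        ⟨d.1, fun b => Sum.inr (d.2 b)⟩)
    (Sum.inl t)

end ITree

/-- Capability sets as characteristic functions. -/
def CapSet (Capability : Type) : Type := Capability → Bool

def cap_empty {Capability : Type} : CapSet Capability := fun _ => false

def cap_full {Capability : Type} : CapSet Capability := fun _ => true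

def cap_union {Capability : Type} (s1 s2 : CapSet Capability) : CapSet Capability :=
  fun c => s1 c || s2 c

/-- An event is within `caps` if it needs no capability, or its required capability is in `caps`. -/
def directive_in_caps {E : Type → Type} {Capability : Type}
    (req : ∀ X : Type, E X → Option Capability) (caps : CapSet Capability)
    {X : Type} (e : E X) : Prop :=
  req X e = none ∨ ∃ c, req X e = some c ∧ caps c = true

/-- One step of the `within_caps` generating functor. -/
def withinCapsF {E : Type → Type} {Capability : Type}
    (req : ∀ X : Type, E X → Option Capability) (caps : CapSet Capability)
    {R : Type} (P : ITree E R → Prop) (t : ITree E R) : Prop :=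
  (∃ r, t = ITree.Ret r) ∨
  (∃ t', t = ITree.Tau t' ∧ P t') ∨
  (∃ (X : Type) (e : E X) (k : X → ITree E R),
      t = ITree.Vis e k ∧ directive_in_caps req caps e ∧ ∀ x, P (k x))

/-- `within_caps caps t`: greatest fixed point of `withinCapsF`, i.e. `t` belongs to
some postfixed point of the generating functor. -/
def within_caps {E : Type → Type} {Capability : Type}
    (req : ∀ X : Type, E X → Option Capability) (caps : CapSet Capability)
    {R : Type} (t : ITree E R) : Prop :=
  ∃ P : ITree E R → Prop, (∀ t', P t' → withinCapsF req caps P t') ∧ P t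

/-! By monotonicity of `within_caps` in the capability set, both hypotheses hold for
`cap_union caps1 caps2`, so it suffices to treat a single capability set. Then the trees
`bind t₀ k` with `t₀` within `caps`, together with all trees within `caps`, form a postfixed
point of `withinCapsF`: `bind` commutes with `Tau` and `Vis`, and `bind (Ret r) k = k r`. -/

theorem PFunctor.M.corec_inr_eq_self {P : PFunctor} {α : Type*}
    (g : α ⊕ P.M → P (α ⊕ P.M)) (hg : ∀ u, g (Sum.inr u) = P.map Sum.inr (M.dest u))
    (u : P.M) : M.corec g (Sum.inr u) = u := by
  refine M.bisim (fun x y => x = M.corec g (Sum.inr y)) ?_ _ _ rfl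
  rintro _ y rfl
  refine ⟨(M.dest y).1, _, (M.dest y).2, ?_, rfl, fun _ => rfl⟩
  rw [M.dest_corec, hg]
  rfl

theorem PFunctor.M.dest_injective {P : PFunctor} : Function.Injective (M.dest (F := P)) :=
  Function.LeftInverse.injective M.mk_dest

namespace ITree

variable {E : Type → Type} {A B : Type}

def bindStep (k : A → ITree E B) (s : ITree E A ⊕ ITree E B) :
    (ITreePF E B).Obj (ITree E A ⊕ ITree E B) :=
  match s with
  | Sum.inl t =>
    match PFunctor.M.dest t with
    | ⟨Sum.inl r, _⟩ =>
      let d := PFunctor.M.dest (k r.down)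
      ⟨d.1, fun b => Sum.inr (d.2 b)⟩
    | ⟨Sum.inr (Sum.inl _), f⟩ =>
      ⟨Sum.inr (Sum.inl PUnit.unit), fun b => Sum.inl (f b)⟩
    | ⟨Sum.inr (Sum.inr p), f⟩ =>
      ⟨Sum.inr (Sum.inr p), fun b => Sum.inl (f b)⟩
  | Sum.inr u =>
    let d := PFunctor.M.dest u
    ⟨d.1, fun b => Sum.inr (d.2 b)⟩

theorem bind_eq_corec (t : ITree E A) (k : A → ITree E B) :
    bind t k = PFunctor.M.corec (bindStep k) (Sum.inl t) := rfl

theorem corec_bindStep_inr (k : A → ITree E B) (u : ITree E B) :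
    PFunctor.M.corec (bindStep k) (Sum.inr u) = u :=
  PFunctor.M.corec_inr_eq_self _ (fun _ => rfl) u

theorem bind_ret (r : A) (k : A → ITree E B) : bind (Ret r) k = k r := by
  apply PFunctor.M.dest_injective
  rw [bind_eq_corec, PFunctor.M.dest_corec]
  exact congrArg (Sigma.mk _) (funext fun _ => corec_bindStep_inr k _)

theorem bind_tau (t : ITree E A) (k : A → ITree E B) : bind (Tau t) k = Tau (bind t k) := by
  apply PFunctor.M.dest_injective
  rw [bind_eq_corec, PFunctor.M.dest_corec]
  rfl

theorem bind_vis {X : Type} (e : E X) (f : X → ITree E A) (k : A → ITree E B) :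
    bind (Vis e f) k = Vis e (fun x => bind (f x) k) := by
  apply PFunctor.M.dest_injective
  rw [bind_eq_corec, PFunctor.M.dest_corec]
  rfl

end ITree

section WithinCaps

variable {E : Type → Type} {Capability : Type} {req : ∀ X : Type, E X → Option Capability}
  {caps caps' : CapSet Capability}

theorem cap_union_left {s1 s2 : CapSet Capability} {c : Capability} (h : s1 c = true) :
    cap_union s1 s2 c = true := by
  simp [cap_union, h]

theorem cap_union_right {s1 s2 : CapSet Capability} {c : Capability} (h : s2 c = true) :
    cap_union s1 s2 c = true := by
  simp [cap_union, h]

theorem directive_in_caps.mono (hcaps : ∀ c, caps c = true → caps' c = true) {X : Type}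
    {e : E X} : directive_in_caps req caps e → directive_in_caps req caps' e
  | .inl hnone => .inl hnone
  | .inr ⟨c, hc, hmem⟩ => .inr ⟨c, hc, hcaps c hmem⟩

theorem withinCapsF_mono (hcaps : ∀ c, caps c = true → caps' c = true) {R : Type}
    {P Q : ITree E R → Prop} (hPQ : ∀ t, P t → Q t) {t : ITree E R} :
    withinCapsF req caps P t → withinCapsF req caps' Q t
  | .inl hret => .inl hret
  | .inr (.inl ⟨t', ht, hP⟩) => .inr (.inl ⟨t', ht, hPQ t' hP⟩)
  | .inr (.inr ⟨X, e, k, ht, he, hP⟩) =>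
    .inr (.inr ⟨X, e, k, ht, he.mono hcaps, fun x => hPQ _ (hP x)⟩)

theorem within_caps.unfold {R : Type} {t : ITree E R} (h : within_caps req caps t) :
    withinCapsF req caps (within_caps req caps) t :=
  let ⟨P, hP, ht⟩ := h
  withinCapsF_mono (fun _ => id) (fun _ ht' => ⟨P, hP, ht'⟩) (hP t ht)

theorem within_caps.mono (hcaps : ∀ c, caps c = true → caps' c = true) {R : Type}
    {t : ITree E R} (h : within_caps req caps t) : within_caps req caps' t :=
  ⟨within_caps req caps, fun _ ht' => withinCapsF_mono hcaps (fun _ => id) ht'.unfold, h⟩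

theorem within_caps_bind {A B : Type} {t : ITree E A} {k : A → ITree E B}
    (ht : within_caps req caps t) (hk : ∀ r, within_caps req caps (k r)) :
    within_caps req caps (ITree.bind t k) := by
  let P : ITree E B → Prop := fun u =>
    (∃ t₀, within_caps req caps t₀ ∧ u = ITree.bind t₀ k) ∨ within_caps req caps u
  have of_within : ∀ u, within_caps req caps u → withinCapsF req caps P u :=
    fun u hu => withinCapsF_mono (fun _ => id) (fun _ => Or.inr) hu.unfold
  refine ⟨P, ?_, .inl ⟨t, ht, rfl⟩⟩
  -- once a `Ret r` leaf of `t₀` is reached, `k r` is absorbed by the second disjunct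
  rintro u (⟨t₀, ht₀, rfl⟩ | hu)
  · rcases ht₀.unfold with ⟨r, rfl⟩ | ⟨t', rfl, ht'⟩ | ⟨X, e, f, rfl, he, hf⟩
    · rw [ITree.bind_ret]
      exact of_within _ (hk r)
    · rw [ITree.bind_tau]
      exact .inr (.inl ⟨_, rfl, .inl ⟨t', ht', rfl⟩⟩)
    · rw [ITree.bind_vis]
      exact .inr (.inr ⟨X, e, _, rfl, he, fun x => .inl ⟨f x, hf x, rfl⟩⟩)
  · exact of_within u hu

end WithinCaps

/-- bind_within_caps: capability bounds compose under monadic bind. -/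
theorem bind_within_caps {E : Type → Type} {Capability : Type}
    (req : ∀ X : Type, E X → Option Capability)
    {A B : Type} (caps1 caps2 : CapSet Capability)
    (t : ITree E A) (k : A → ITree E B)
    (ht : within_caps req caps1 t)
    (hk : ∀ r : A, within_caps req caps2 (k r)) :
    within_caps req (cap_union caps1 caps2) (ITree.bind t k) :=
  within_caps_bind (ht.mono fun _ => cap_union_left) fun r => (hk r).mono fun _ => cap_union_right
end

section
/- (trace_of_bind) Traces compose under monadic bind: if trace_of t tr1 x and trace_of (k x) tr2 r, then trace_of (t >>= k) (tr1 ++ tr2) r. -/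
/-- Governance events: a governance check named by a string, answered by a Bool. -/
inductive GovE : Type → Type where
  | GovCheck : String → GovE Bool

/-- The governed signature: governance checks plus I/O events. -/
def GovIOE (IOE : Type → Type) (X : Type) : Type := GovE X ⊕ IOE X

/-- One step of the `gov_safe` generating functor. -/
def govSafeF {IOE : Type → Type} {R : Type}
    (P : Bool → ITree (GovIOE IOE) R → Prop)
    (a : Bool) (t : ITree (GovIOE IOE) R) : Prop :=
  (∃ r, t = ITree.Ret r) ∨
  (∃ t', t = ITree.Tau t' ∧ P a t') ∨
  (∃ (s : String) (k : Bool → ITree (GovIOE IOE) R),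
      t = ITree.Vis (E := GovIOE IOE) (X := Bool) (Sum.inl (GovE.GovCheck s)) k ∧
      P true (k true) ∧ P false (k false)) ∨
  (∃ (X : Type) (e : IOE X) (k : X → ITree (GovIOE IOE) R),
      t = ITree.Vis (E := GovIOE IOE) (X := X) (Sum.inr e) k ∧ a = true ∧ ∀ x, P false (k x))

/-- `gov_safe a t`: greatest fixed point of `govSafeF`, i.e. `(a, t)` belongs to
some postfixed point of the generating functor. -/
def gov_safe {IOE : Type → Type} {R : Type} (a : Bool) (t : ITree (GovIOE IOE) R) : Prop :=
  ∃ P : Bool → ITree (GovIOE IOE) R → Prop,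
    (∀ a' t', P a' t' → govSafeF P a' t') ∧ P a t

/-- Trace events: governance checks (with outcome) and I/O events (by name). -/
inductive TraceEvent where
  | TE_GovCheck : String → Bool → TraceEvent
  | TE_IO : String → TraceEvent

/-- `trace_of ioName t tr r`: execution of `t` produces the finite trace `tr`
and returns `r`. -/
inductive trace_of {IOE : Type → Type} (ioName : ∀ X : Type, IOE X → String)
    {R : Type} : ITree (GovIOE IOE) R → List TraceEvent → R → Prop where
  | ret (r : R) : trace_of ioName (ITree.Ret r) [] r
  | tau {t : ITree (GovIOE IOE) R} {tr : List TraceEvent} {r : R} :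
      trace_of ioName t tr r → trace_of ioName (ITree.Tau t) tr r
  | gov {s : String} {k : Bool → ITree (GovIOE IOE) R} {b : Bool}
      {tr : List TraceEvent} {r : R} :
      trace_of ioName (k b) tr r →
      trace_of ioName (ITree.Vis (E := GovIOE IOE) (X := Bool) (Sum.inl (GovE.GovCheck s)) k)
        (TraceEvent.TE_GovCheck s b :: tr) r
  | io {X : Type} {e : IOE X} {k : X → ITree (GovIOE IOE) R} {x : X}
      {tr : List TraceEvent} {r : R} :
      trace_of ioName (k x) tr r →
      trace_of ioName (ITree.Vis (E := GovIOE IOE) (X := X) (Sum.inr e) k)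
        (TraceEvent.TE_IO (ioName X e) :: tr) r

/-!
By induction on the derivation of `trace_of ioName t tr1 x`, the theorem reduces to the three
unfolding equations of `bind` on `Ret`, `Tau` and `Vis`. The last two are single corecursion
steps; the first holds because the corecursion of `bind`, once it has reached `k r`, only copies
it, and a corecursion that copies the final coalgebra is the identity by uniqueness of corecursion.
-/

namespace PFunctor.M

variable {P : PFunctor}

theorem corec_dest : M.corec (M.dest : M P → P (M P)) = id :=
  (corec_unique _ id fun _ => (PFunctor.id_map _ _).symm).symm

theorem corec_inr {α : Type*} {g : α ⊕ M P → P (α ⊕ M P)}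
    (hg : ∀ u, g (Sum.inr u) = P.map Sum.inr (M.dest u)) (u : M P) :
    M.corec g (Sum.inr u) = u := by
  suffices M.corec g ∘ Sum.inr = M.corec M.dest by
    rw [corec_dest] at this
    exact congrFun this u
  exact corec_unique _ _ fun u => by rw [Function.comp_apply, dest_corec, hg, PFunctor.map_map]

end PFunctor.M

/-- trace_of_bind: traces compose under monadic bind. -/
theorem trace_of_bind {IOE : Type → Type} (ioName : ∀ X : Type, IOE X → String)
    {A B : Type} (t : ITree (GovIOE IOE) A) (k : A → ITree (GovIOE IOE) B)
    (tr1 tr2 : List TraceEvent) (x : A) (r : B)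
    (h1 : trace_of ioName t tr1 x) (h2 : trace_of ioName (k x) tr2 r) :
    trace_of ioName (ITree.bind t k) (tr1 ++ tr2) r := by
  induction h1 with
  | ret => exact (ITree.bind_ret _ k).symm ▸ h2
  | tau _ ih => exact (ITree.bind_tau _ k).symm ▸ (ih h2).tau
  | gov _ ih => exact (ITree.bind_vis _ _ k).symm ▸ (ih h2).gov
  | io _ ih => exact (ITree.bind_vis _ _ k).symm ▸ (ih h2).io
end
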